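/- arXiv:2206.08495 — 6 statements merged into one kernel-verified Lean document; each statement's English description precedes it below -/
import Mathlib

section
/- Let X, Y be two non-redundant allocations of the same set of goods among agents with matroid rank valuations. If agent i satisfies |X_i| < |Y_i|, then there exists a finite sequence of single-good transfers starting with some good g ∈ Y_i \ X_i moved to agent i, after which agent i's utility increases by 1, some agent k with |X_k| > |Y_k| loses one unit of utility, and all other agents' utilities are unchanged; moreover each good is moved at most once. -/
def IsMRF {G : Type*} [DecidableEq G] (v : Finset G → ℕ) : Prop :=
  v ∅ = 0 ∧
  (∀ (S : Finset G) (g : G), v (insert g S) = v S ∨ v (insert g S) = v S + 1) ∧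
  (∀ (S T : Finset G) (g : G), S ⊆ T → g ∉ T →
    v (insert g T) + v S ≤ v (insert g S) + v T)

def IsPartition {G : Type*} [DecidableEq G] [Fintype G] {n : ℕ}
    (X : Fin (n + 1) → Finset G) : Prop :=
  (∀ i j, i ≠ j → Disjoint (X i) (X j)) ∧ (Finset.univ.biUnion X = Finset.univ)

def NonRedundant {G : Type*} [DecidableEq G] {n : ℕ}
    (v : Fin (n + 1) → Finset G → ℕ) (X : Fin (n + 1) → Finset G) : Prop :=
  ∀ i, v i (X i) = (X i).card

/-- Move good `g` to agent `p`: `p` gains `g`, everyone else loses it. -/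
def move {G : Type*} [DecidableEq G] {n : ℕ}
    (X : Fin (n + 1) → Finset G) (g : G) (p : Fin (n + 1)) :
    Fin (n + 1) → Finset G :=
  fun j => if j = p then insert g (X j) else (X j).erase g

section aux
variable {G : Type*} [DecidableEq G] {v : Finset G → ℕ}

lemma mrf_insert_le (hv : IsMRF v) (S : Finset G) (g : G) : v (insert g S) ≤ v S + 1 := by
  rcases hv.2.1 S g with h | h <;> omega

lemma mrf_insert_ge (hv : IsMRF v) (S : Finset G) (g : G) : v S ≤ v (insert g S) := by
  rcases hv.2.1 S g with h | h <;> omega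

lemma mrf_le_card (hv : IsMRF v) (S : Finset G) : v S ≤ S.card := by
  induction S using Finset.induction_on with
  | empty => simp [hv.1]
  | @insert a s ha ih =>
    have h1 := mrf_insert_le hv s a
    have h2 := Finset.card_insert_of_notMem ha
    omega

lemma mrf_union_le (hv : IsMRF v) (A S : Finset G) : v (A ∪ S) ≤ v S + A.card := by
  induction A using Finset.induction_on with
  | empty => simp
  | @insert a s ha ih =>
    rw [Finset.insert_union]
    have h1 := mrf_insert_le hv (s ∪ S) a
    have h2 := Finset.card_insert_of_notMem ha
    omega

lemma mrf_union_ge (hv : IsMRF v) (A S : Finset G) : v S ≤ v (A ∪ S) := by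
  induction A using Finset.induction_on with
  | empty => simp
  | @insert a s ha ih =>
    rw [Finset.insert_union]
    have h1 := mrf_insert_ge hv (s ∪ S) a
    omega

lemma mrf_mono (hv : IsMRF v) {S T : Finset G} (h : S ⊆ T) : v S ≤ v T := by
  have := mrf_union_ge hv (T \ S) S
  rwa [Finset.sdiff_union_of_subset h] at this

lemma mrf_subset_full (hv : IsMRF v) {S T : Finset G} (h : S ⊆ T)
    (hT : v T = T.card) : v S = S.card := by
  have h1 := mrf_union_le hv (T \ S) S
  rw [Finset.sdiff_union_of_subset h] at h1
  have h2 := Finset.card_sdiff_of_subset h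
  have h3 := mrf_le_card hv S
  have h4 := Finset.card_le_card h
  omega

lemma mrf_exchange (hv : IsMRF v) {S T : Finset G} (hS : v S = S.card)
    (hT : v T = T.card) (hlt : S.card < T.card) :
    ∃ g ∈ T \ S, v (insert g S) = v S + 1 := by
  by_contra hcon
  push_neg at hcon
  have hstep : ∀ g ∈ T \ S, v (insert g S) = v S := by
    intro g hg
    rcases hv.2.1 S g with h | h
    · exact h
    · exact absurd h (hcon g hg)
  have hA : ∀ A : Finset G, A ⊆ T \ S → v (A ∪ S) = v S := by
    intro A
    induction A using Finset.induction_on with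
    | empty => simp
    | @insert a s ha ih =>
      intro hsub
      have haTS : a ∈ T \ S := hsub (Finset.mem_insert_self a s)
      have haS : a ∉ S := (Finset.mem_sdiff.mp haTS).2
      have hanot : a ∉ s ∪ S := by
        simp only [Finset.mem_union]
        tauto
      have hsub' : s ⊆ T \ S := fun x hx => hsub (Finset.mem_insert_of_mem hx)
      have hsm := hv.2.2 S (s ∪ S) a Finset.subset_union_right hanot
      have hins := hstep a haTS
      have hih := ih hsub'
      have hge := mrf_insert_ge hv (s ∪ S) a
      rw [Finset.insert_union]
      omega
  have h1 : v T ≤ v S := by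
    have h2 : v T ≤ v ((T \ S) ∪ S) := by
      have := mrf_union_ge hv S T
      rw [Finset.sdiff_union_self_eq_union, Finset.union_comm T S]
      exact this
    rw [hA (T \ S) (Finset.Subset.refl _)] at h2
    exact h2
  have := mrf_le_card hv S
  omega

end aux

lemma key {G : Type*} [DecidableEq G] [Fintype G] {n : ℕ}
    (v : Fin (n + 1) → Finset G → ℕ) (hv : ∀ i, IsMRF (v i))
    (Y : Fin (n + 1) → Finset G) (hY : IsPartition Y) (hYnr : NonRedundant v Y) :
    ∀ (N : ℕ) (X : Fin (n + 1) → Finset G),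
      (Finset.univ.biUnion (fun j => Y j \ X j)).card ≤ N →
      IsPartition X → NonRedundant v X →
      ∀ i, (X i).card < (Y i).card →
      ∃ moves : List (G × Fin (n + 1)),
        (∀ m ∈ moves, m.1 ∈ Finset.univ.biUnion (fun j => Y j \ X j)) ∧
        (moves.map Prod.fst).Nodup ∧
        (∃ g ∈ Y i \ X i, moves.head? = some (g, i)) ∧
        (v i ((moves.foldl (fun A m => move A m.1 m.2) X) i) = v i (X i) + 1 ∧
         ∃ k, (Y k).card < (X k).card ∧
           v k ((moves.foldl (fun A m => move A m.1 m.2) X) k) + 1 = v k (X k) ∧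
           ∀ j, j ≠ i → j ≠ k →
             v j ((moves.foldl (fun A m => move A m.1 m.2) X) j) = v j (X j)) := by
  intro N
  induction N with
  | zero =>
    intro X hcard hX hXnr i hi
    exfalso
    obtain ⟨g, hg, -⟩ := mrf_exchange (hv i) (hXnr i) (hYnr i) hi
    have hmem : g ∈ Finset.univ.biUnion (fun j => Y j \ X j) :=
      Finset.mem_biUnion.mpr ⟨i, Finset.mem_univ i, hg⟩
    have := Finset.card_pos.mpr ⟨g, hmem⟩
    omega
  | succ N IH =>
    intro X hcard hX hXnr i hi
    obtain ⟨g, hg, hgval⟩ := mrf_exchange (hv i) (hXnr i) (hYnr i) hi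
    obtain ⟨hgYi, hgXi⟩ := Finset.mem_sdiff.mp hg
    -- the owner p of good g
    have hgUniv : g ∈ Finset.univ.biUnion X := by rw [hX.2]; exact Finset.mem_univ g
    obtain ⟨p, -, hgp⟩ := Finset.mem_biUnion.mp hgUniv
    have hpi : p ≠ i := fun h => hgXi (h ▸ hgp)
    have hgXj : ∀ j, j ≠ p → g ∉ X j := fun j hj hmem =>
      Finset.disjoint_left.mp (hX.1 j p hj) hmem hgp
    have hgYj : ∀ j, j ≠ i → g ∉ Y j := fun j hj hmem =>
      Finset.disjoint_left.mp (hY.1 j i hj) hmem hgYi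
    set X' := move X g i with hX'def
    have hX'i : X' i = insert g (X i) := by simp [hX'def, move]
    have hX'j : ∀ j, j ≠ i → X' j = (X j).erase g := by
      intro j hj; simp [hX'def, move, hj]
    have hX'jeq : ∀ j, j ≠ i → j ≠ p → X' j = X j := by
      intro j hj hjp
      rw [hX'j j hj, Finset.erase_eq_of_notMem (hgXj j hjp)]
    have hviX' : v i (X' i) = v i (X i) + 1 := by rw [hX'i]; exact hgval
    have hcardX'i : (X' i).card = (X i).card + 1 := by
      rw [hX'i, Finset.card_insert_of_notMem hgXi]
    have hcardX'p : (X' p).card = (X p).card - 1 := by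
      rw [hX'j p hpi, Finset.card_erase_of_mem hgp]
    have hgpcard : 1 ≤ (X p).card := Finset.card_pos.mpr ⟨g, hgp⟩
    -- U X' ⊆ (U X).erase g
    have hUsub : (Finset.univ.biUnion (fun j => Y j \ X' j)) ⊆
        (Finset.univ.biUnion (fun j => Y j \ X j)).erase g := by
      intro h hmem
      obtain ⟨j, -, hj⟩ := Finset.mem_biUnion.mp hmem
      obtain ⟨hhY, hhX'⟩ := Finset.mem_sdiff.mp hj
      by_cases hji : j = i
      · subst hji
        rw [hX'i, Finset.mem_insert] at hhX'
        push_neg at hhX'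
        exact Finset.mem_erase.mpr ⟨hhX'.1,
          Finset.mem_biUnion.mpr ⟨j, Finset.mem_univ j, Finset.mem_sdiff.mpr ⟨hhY, hhX'.2⟩⟩⟩
      · have hne : h ≠ g := fun he => hgYj j hji (he ▸ hhY)
        rw [hX'j j hji] at hhX'
        have : h ∉ X j := fun hmem2 => hhX' (Finset.mem_erase.mpr ⟨hne, hmem2⟩)
        exact Finset.mem_erase.mpr ⟨hne,
          Finset.mem_biUnion.mpr ⟨j, Finset.mem_univ j, Finset.mem_sdiff.mpr ⟨hhY, this⟩⟩⟩
    have hgU : g ∈ Finset.univ.biUnion (fun j => Y j \ X j) :=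
      Finset.mem_biUnion.mpr ⟨i, Finset.mem_univ i, hg⟩
    have hUcard : (Finset.univ.biUnion (fun j => Y j \ X' j)).card ≤ N := by
      have h1 := Finset.card_le_card hUsub
      have h2 := Finset.card_erase_of_mem hgU
      omega
    by_cases hcase : (Y p).card < (X p).card
    · -- single move suffices
      refine ⟨[(g, i)], ?_, List.nodup_singleton _, ⟨g, hg, rfl⟩, ?_, p, hcase, ?_, ?_⟩
      · intro m hm
        simp only [List.mem_singleton] at hm
        subst hm; exact hgU
      · simpa using hviX'
      · simp only [List.foldl_cons, List.foldl_nil]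
        show v p (X' p) + 1 = v p (X p)
        have := mrf_subset_full (hv p) (Finset.erase_subset g (X p)) (hXnr p)
        rw [hX'j p hpi, this, Finset.card_erase_of_mem hgp, hXnr p]
        omega
      · intro j hji hjp
        simp only [List.foldl_cons, List.foldl_nil]
        show v j (X' j) = v j (X j)
        rw [hX'jeq j hji hjp]
    · -- recurse from p with allocation X'
      push_neg at hcase
      have hX'part : IsPartition X' := by
        constructor
        · intro a b hab
          rw [Finset.disjoint_left]
          intro x hxa hxb
          by_cases hai : a = i
          · rw [hai, hX'i, Finset.mem_insert] at hxa
            have hbi : b ≠ i := fun h => hab (by rw [hai, h])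
            rw [hX'j b hbi, Finset.mem_erase] at hxb
            rcases hxa with h | h
            · exact hxb.1 h
            · exact Finset.disjoint_left.mp (hX.1 a b hab) (hai ▸ h) hxb.2
          · rw [hX'j a hai, Finset.mem_erase] at hxa
            by_cases hbi : b = i
            · rw [hbi, hX'i, Finset.mem_insert] at hxb
              rcases hxb with h | h
              · exact hxa.1 h
              · exact Finset.disjoint_left.mp (hX.1 a b hab) hxa.2 (hbi ▸ h)
            · rw [hX'j b hbi, Finset.mem_erase] at hxb
              exact Finset.disjoint_left.mp (hX.1 a b hab) hxa.2 hxb.2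
        · apply Finset.eq_univ_iff_forall.mpr
          intro x
          by_cases hx : x = g
          · exact Finset.mem_biUnion.mpr ⟨i, Finset.mem_univ i,
              by rw [hX'i]; exact hx ▸ Finset.mem_insert_self g (X i)⟩
          · have : x ∈ Finset.univ.biUnion X := by rw [hX.2]; exact Finset.mem_univ x
            obtain ⟨q, -, hq⟩ := Finset.mem_biUnion.mp this
            refine Finset.mem_biUnion.mpr ⟨q, Finset.mem_univ q, ?_⟩
            by_cases hqi : q = i
            · rw [hqi, hX'i]; exact Finset.mem_insert_of_mem (hqi ▸ hq)
            · rw [hX'j q hqi]; exact Finset.mem_erase.mpr ⟨hx, hq⟩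
      have hX'nr : NonRedundant v X' := by
        intro j
        by_cases hji : j = i
        · rw [hji, hviX', hXnr i, hcardX'i]
        · rw [hX'j j hji]
          exact mrf_subset_full (hv j) (Finset.erase_subset g (X j)) (hXnr j)
      have hpX' : (X' p).card < (Y p).card := by omega
      obtain ⟨moves', hm'U, hm'nd, ⟨g', hg', hhead⟩, hm'i, k, hkcard, hkval, hothers⟩ :=
        IH X' hUcard hX'part hX'nr p hpX'
      -- k ≠ i and k ≠ p
      have hki : k ≠ i := by
        intro h; subst h
        rw [hcardX'i] at hkcard
        omega
      have hkp : k ≠ p := by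
        intro h; subst h
        omega
      have hX'k : X' k = X k := hX'jeq k hki hkp
      refine ⟨(g, i) :: moves', ?_, ?_, ⟨g, hg, rfl⟩, ?_, k, ?_, ?_, ?_⟩
      · intro m hm
        rcases List.mem_cons.mp hm with h | h
        · subst h; exact hgU
        · exact Finset.mem_of_mem_erase (hUsub (hm'U m h))
      · rw [List.map_cons, List.nodup_cons]
        refine ⟨?_, hm'nd⟩
        intro hmem
        obtain ⟨m, hm, hmg⟩ := List.mem_map.mp hmem
        have := hUsub (hm'U m hm)
        rw [hmg] at this
        exact (Finset.mem_erase.mp this).1 rfl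
      · -- agent i's value
        simp only [List.foldl_cons]
        have heq : v i ((moves'.foldl (fun A m => move A m.1 m.2) X') i) = v i (X' i) :=
          hothers i (Ne.symm hpi) (Ne.symm hki)
        rw [show (move X g i) = X' from rfl, heq, hviX']
      · -- k is overloaded in X
        have : (X' k).card = (X k).card := by rw [hX'k]
        omega
      · simp only [List.foldl_cons]
        rw [show (move X g i) = X' from rfl, ← hX'k, hkval, hX'k]
      · intro j hji hjk
        simp only [List.foldl_cons]
        rw [show (move X g i) = X' from rfl]
        by_cases hjp : j = p
        · subst hjp
          have h1 : v j (X' j) = (X j).card - 1 := by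
            rw [hX'j j hji,
              mrf_subset_full (hv j) (Finset.erase_subset g (X j)) (hXnr j),
              Finset.card_erase_of_mem hgp]
          rw [hm'i, h1, hXnr j]
          omega
        · rw [hothers j hjp hjk, hX'jeq j hji hjp]


theorem transfer_path_exists {G : Type*} [DecidableEq G] [Fintype G] {n : ℕ}
    (v : Fin (n + 1) → Finset G → ℕ) (hv : ∀ i, IsMRF (v i))
    (X Y : Fin (n + 1) → Finset G)
    (hX : IsPartition X) (hY : IsPartition Y)
    (hXnr : NonRedundant v X) (hYnr : NonRedundant v Y)
    (i : Fin (n + 1)) (hi : (X i).card < (Y i).card) :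
    ∃ moves : List (G × Fin (n + 1)),
      (moves.map Prod.fst).Nodup ∧
      (∃ g ∈ Y i \ X i, moves.head? = some (g, i)) ∧
      (let X' := moves.foldl (fun A m => move A m.1 m.2) X
       v i (X' i) = v i (X i) + 1 ∧
       ∃ k, (Y k).card < (X k).card ∧
         v k (X' k) + 1 = v k (X k) ∧
         ∀ j, j ≠ i → j ≠ k → v j (X' j) = v j (X j)) := by
  obtain ⟨moves, -, hnd, hhead, hrest⟩ :=
    key v hv Y hY hYnr (Finset.univ.biUnion (fun j => Y j \ X j)).card X le_rfl hX hXnr i hi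
  exact ⟨moves, hnd, hhead, hrest⟩
end

section
/- Let X and Y be two non-redundant allocations among agents with matroid rank valuations. If |X_i| < |Y_i| for agent i, then in the exchange graph of X there exists a directed path from the set F_i(X) = {g : v_i(X_i ∪ {g}) = v_i(X_i)+1} to some good in X_k for an agent k with |X_k| > |Y_k|. -/
/-- Edge of the exchange graph: the owner of `g` can replace `g` by `g'`
with no loss of value. -/
def ExchangeEdge {G : Type*} [DecidableEq G] {n : ℕ}
    (v : Fin (n + 1) → Finset G → ℕ) (X : Fin (n + 1) → Finset G)
    (g g' : G) : Prop :=
  ∃ j, g ∈ X j ∧ g' ∉ X j ∧ v j (insert g' ((X j).erase g)) = v j (X j)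

namespace ExchangeAux

variable {G : Type*} [DecidableEq G] {v : Finset G → ℕ}

theorem step_bounds (hv : IsMRF v) (S : Finset G) (g : G) :
    v S ≤ v (insert g S) ∧ v (insert g S) ≤ v S + 1 := by
  rcases hv.2.1 S g with h | h <;> omega

theorem mono (hv : IsMRF v) {S T : Finset G} (h : S ⊆ T) : v S ≤ v T := by
  have key : ∀ D : Finset G, v S ≤ v (S ∪ D) := by
    intro D
    induction D using Finset.induction_on with
    | empty => simp
    | @insert g D hg ih =>
        have h1 := (step_bounds hv (S ∪ D) g).1
        rw [Finset.union_insert]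
        omega
  have := key T
  rwa [Finset.union_eq_right.mpr h] at this

theorem local' (hv : IsMRF v) (S T : Finset G) (g : G) (hST : S ⊆ T) :
    v (insert g T) + v S ≤ v (insert g S) + v T := by
  by_cases hg : g ∈ T
  · rw [Finset.insert_eq_self.mpr hg]
    have := mono hv (Finset.subset_insert g S)
    omega
  · exact hv.2.2 S T g hST hg

theorem union_ineq (hv : IsMRF v) (U : Finset G) :
    ∀ S T : Finset G, S ⊆ T → v (T ∪ U) + v S ≤ v (S ∪ U) + v T := by
  induction U using Finset.induction_on with
  | empty => intro S T h; simp only [Finset.union_empty]; omega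
  | @insert g U hg ih =>
      intro S T h
      have h1 := ih S T h
      have h2 := local' hv (S ∪ U) (T ∪ U) g (Finset.union_subset_union_left h)
      simp only [Finset.union_insert] at *
      omega

theorem submod (hv : IsMRF v) (A B : Finset G) :
    v (A ∪ B) + v (A ∩ B) ≤ v A + v B := by
  have := union_ineq hv B (A ∩ B) A Finset.inter_subset_left
  rw [Finset.union_eq_right.mpr Finset.inter_subset_right] at this; omega

end ExchangeAux

namespace ExchangeAux

variable {G : Type*} [DecidableEq G] {v : Finset G → ℕ}

theorem le_card (hv : IsMRF v) (S : Finset G) : v S ≤ S.card := by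
  induction S using Finset.induction_on with
  | empty => simp [hv.1]
  | @insert g S hg ih =>
      have := (step_bounds hv S g).2
      rw [Finset.card_insert_of_notMem hg]
      omega

theorem card_diff_bound (hv : IsMRF v) {S T : Finset G} (h : S ⊆ T) :
    v T ≤ v S + (T \ S).card := by
  have key : ∀ D : Finset G, v (S ∪ D) ≤ v S + D.card := by
    intro D
    induction D using Finset.induction_on with
    | empty => simp
    | @insert g D hg ih =>
        have h1 := (step_bounds hv (S ∪ D) g).2
        rw [Finset.union_insert, Finset.card_insert_of_notMem hg]
        omega
  have := key (T \ S)
  rwa [Finset.union_sdiff_of_subset h] at this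

theorem indep_subset (hv : IsMRF v) {S T : Finset G} (h : S ⊆ T)
    (hT : v T = T.card) : v S = S.card := by
  have h1 := card_diff_bound hv h
  have h2 := le_card hv S
  have h3 := Finset.card_sdiff_of_subset h
  have h4 := Finset.card_le_card h
  omega

theorem spanned_union (hv : IsMRF v) {A : Finset G} (D : Finset G)
    (hD : ∀ g ∈ D, v (insert g A) = v A) : v (A ∪ D) = v A := by
  induction D using Finset.induction_on with
  | empty => simp
  | @insert g D hg ih =>
      have ih' := ih (fun x hx => hD x (Finset.mem_insert_of_mem hx))
      have h1 := local' hv A (A ∪ D) g Finset.subset_union_left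
      have h2 := hD g (Finset.mem_insert_self g D)
      have h3 := mono hv (show A ⊆ insert g (A ∪ D) from
        Finset.subset_union_left.trans (Finset.subset_insert _ _))
      rw [Finset.union_insert]
      omega

theorem key_noedge (hv : IsMRF v) {B : Finset G} (hB : v B = B.card) {g' : G}
    (hg' : g' ∉ B) (hsp : v (insert g' B) = v B) :
    ∀ S : Finset G, S ⊆ B → (∀ g ∈ S, v (insert g' (B.erase g)) ≠ B.card) →
      v (insert g' (B \ S)) = (B \ S).card := by
  intro S
  induction S using Finset.induction_on with
  | empty => intro _ _; rw [Finset.sdiff_empty]; omega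
  | @insert g S hgS ih =>
      intro hSB hno
      have hgB : g ∈ B := hSB (Finset.mem_insert_self g S)
      have hS : S ⊆ B := (Finset.subset_insert g S).trans hSB
      have ih' := ih hS (fun x hx => hno x (Finset.mem_insert_of_mem hx))
      have h1 : v (B.erase g) = (B.erase g).card :=
        indep_subset hv (Finset.erase_subset g B) hB
      have hcard_e : (B.erase g).card = B.card - 1 := Finset.card_erase_of_mem hgB
      have hb1 : 1 ≤ B.card := Finset.card_pos.mpr ⟨g, hgB⟩
      have h2 : v (insert g' (B.erase g)) = B.card - 1 := by
        have hb := step_bounds hv (B.erase g) g'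
        have := hno g (Finset.mem_insert_self g S)
        omega
      have hsub := submod hv (insert g' (B \ S)) (insert g' (B.erase g))
      have hU : (insert g' (B \ S)) ∪ (insert g' (B.erase g)) = insert g' B := by
        ext x
        have hxg : x = g → x ∉ S := fun h => h ▸ hgS
        simp only [Finset.mem_union, Finset.mem_insert, Finset.mem_sdiff,
          Finset.mem_erase]
        constructor
        · rintro ((h | ⟨h, _⟩) | (h | ⟨_, h⟩)) <;> simp [h]
        · rintro (h | h)
          · exact Or.inl (Or.inl h)
          · by_cases hx : x = g
            · exact Or.inl (Or.inr ⟨h, hxg hx⟩)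
            · exact Or.inr (Or.inr ⟨hx, h⟩)
      have hI : (insert g' (B \ S)) ∩ (insert g' (B.erase g))
          = insert g' (B \ insert g S) := by
        ext x
        simp only [Finset.mem_inter, Finset.mem_insert, Finset.mem_sdiff,
          Finset.mem_erase]
        tauto
      rw [hU, hI] at hsub
      have hlow : v (B \ insert g S) = (B \ insert g S).card :=
        indep_subset hv (Finset.sdiff_subset) hB
      have hmono : v (B \ insert g S) ≤ v (insert g' (B \ insert g S)) :=
        mono hv (Finset.subset_insert _ _)
      have c1 : (B \ S).card = B.card - S.card := Finset.card_sdiff_of_subset hS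
      have c2 : (B \ insert g S).card = B.card - (S.card + 1) := by
        rw [Finset.card_sdiff_of_subset hSB, Finset.card_insert_of_notMem hgS]
      have c3 : S.card + 1 ≤ B.card := by
        have := Finset.card_le_card hSB
        rwa [Finset.card_insert_of_notMem hgS] at this
      omega

end ExchangeAux

theorem exchange_graph_reachability {G : Type*} [DecidableEq G] [Fintype G]
    {n : ℕ} (v : Fin (n + 1) → Finset G → ℕ) (hv : ∀ i, IsMRF (v i))
    (X Y : Fin (n + 1) → Finset G)
    (hX : IsPartition X) (hY : IsPartition Y)
    (hXnr : NonRedundant v X) (hYnr : NonRedundant v Y)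
    (i : Fin (n + 1)) (hi : (X i).card < (Y i).card) :
    ∃ g₀ g : G, v i (insert g₀ (X i)) = v i (X i) + 1 ∧
      Relation.ReflTransGen (ExchangeEdge v X) g₀ g ∧
      ∃ k, (Y k).card < (X k).card ∧ g ∈ X k := by
  classical
  by_contra H
  push_neg at H
  set R : Finset G := Finset.univ.filter (fun g => ∃ g₀,
    v i (insert g₀ (X i)) = v i (X i) + 1 ∧
    Relation.ReflTransGen (ExchangeEdge v X) g₀ g) with hRdef
  have memR : ∀ g : G, g ∈ R ↔ ∃ g₀, v i (insert g₀ (X i)) = v i (X i) + 1 ∧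
      Relation.ReflTransGen (ExchangeEdge v X) g₀ g := by
    intro g; simp [hRdef]
  have Rclosed : ∀ ⦃g g' : G⦄, g ∈ R → ExchangeEdge v X g g' → g' ∈ R := by
    intro g g' hg he
    obtain ⟨g₀, h1, h2⟩ := (memR g).mp hg
    exact (memR g').mpr ⟨g₀, h1, h2.tail he⟩
  have FsubR : ∀ g₀ : G, v i (insert g₀ (X i)) = v i (X i) + 1 → g₀ ∈ R :=
    fun g₀ h => (memR g₀).mpr ⟨g₀, h, Relation.ReflTransGen.refl⟩
  -- the key per-agent lemma
  have KL : ∀ j, (j = i ∨ (X j ∩ R).Nonempty) → (Y j \ R).card ≤ (X j \ R).card := by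
    intro j hj
    have hindep := hXnr j
    have sub : ∀ g' : G, g' ∉ R → g' ∉ X j →
        v j (insert g' (X j \ R)) = v j (X j \ R) := by
      intro g' hgR hgX
      rcases (hv j).2.1 (X j) g' with hsp | hnsp
      · -- g' spanned by X j : use key_noedge with S = X j ∩ R
        have hno : ∀ g ∈ X j ∩ R, v j (insert g' ((X j).erase g)) ≠ (X j).card := by
          intro g hg heq
          have hgXj := Finset.mem_inter.mp hg
          exact hgR (Rclosed hgXj.2 ⟨j, hgXj.1, hgX, by rw [heq, hindep]⟩)
        have hkey := ExchangeAux.key_noedge (hv j) hindep hgX hsp (X j ∩ R)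
          Finset.inter_subset_left hno
        have heq : X j \ (X j ∩ R) = X j \ R := by
          ext x; simp only [Finset.mem_sdiff, Finset.mem_inter]; tauto
        rw [heq] at hkey
        have hXind : v j (X j \ R) = (X j \ R).card :=
          ExchangeAux.indep_subset (hv j) Finset.sdiff_subset hindep
        omega
      · -- g' not spanned by X j : produces an edge into R, contradiction
        exfalso
        rcases hj with rfl | ⟨g, hg⟩
        · exact hgR (FsubR g' hnsp)
        · have hgXj := Finset.mem_inter.mp hg
          have hins : v j (insert g' (X j)) = (insert g' (X j)).card := by
            rw [Finset.card_insert_of_notMem hgX]; omega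
          have hsubset : insert g' ((X j).erase g) ⊆ insert g' (X j) :=
            Finset.insert_subset_insert _ (Finset.erase_subset _ _)
          have hv' := ExchangeAux.indep_subset (hv j) hsubset hins
          have hge : g' ∉ (X j).erase g := fun h => hgX (Finset.mem_of_mem_erase h)
          have hc : (insert g' ((X j).erase g)).card = (X j).card := by
            rw [Finset.card_insert_of_notMem hge, Finset.card_erase_of_mem hgXj.1]
            have : 1 ≤ (X j).card := Finset.card_pos.mpr ⟨g, hgXj.1⟩
            omega
          exact hgR (Rclosed hgXj.2 ⟨j, hgXj.1, hgX, by rw [hv', hc, hindep]⟩)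
    have hspu : v j ((X j \ R) ∪ ((Y j \ R) \ X j)) = v j (X j \ R) :=
      ExchangeAux.spanned_union (hv j) _ (fun g hg => by
        have h := Finset.mem_sdiff.mp hg
        exact sub g (Finset.mem_sdiff.mp h.1).2 h.2)
    have hsubset : Y j \ R ⊆ (X j \ R) ∪ ((Y j \ R) \ X j) := by
      intro y hy
      by_cases hyX : y ∈ X j
      · exact Finset.mem_union_left _ (Finset.mem_sdiff.mpr
          ⟨hyX, (Finset.mem_sdiff.mp hy).2⟩)
      · exact Finset.mem_union_right _ (Finset.mem_sdiff.mpr ⟨hy, hyX⟩)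
    have hYind : v j (Y j \ R) = (Y j \ R).card :=
      ExchangeAux.indep_subset (hv j) Finset.sdiff_subset (hYnr j)
    have hXind : v j (X j \ R) = (X j \ R).card :=
      ExchangeAux.indep_subset (hv j) Finset.sdiff_subset hindep
    have := ExchangeAux.mono (hv j) hsubset
    omega
  -- counting
  have sumP : ∀ Z : Fin (n + 1) → Finset G, IsPartition Z →
      ∑ j, (Z j ∩ R).card = R.card := by
    intro Z hZ
    have hR : R = Finset.univ.biUnion (fun j => Z j ∩ R) := by
      ext g
      simp only [Finset.mem_biUnion, Finset.mem_inter, Finset.mem_univ, true_and]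
      constructor
      · intro hg
        have : g ∈ Finset.univ.biUnion Z := hZ.2 ▸ Finset.mem_univ g
        obtain ⟨j, _, hj⟩ := Finset.mem_biUnion.mp this
        exact ⟨j, hj, hg⟩
      · rintro ⟨j, _, hg⟩; exact hg
    have hdisj : ∀ j ∈ Finset.univ, ∀ k ∈ Finset.univ, j ≠ k →
        Disjoint (Z j ∩ R) (Z k ∩ R) := fun j _ k _ hjk =>
      (hZ.1 j k hjk).mono Finset.inter_subset_left Finset.inter_subset_left
    conv_rhs => rw [hR]
    rw [Finset.card_biUnion hdisj]
  have sumX := sumP X hX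
  have sumY := sumP Y hY
  have splitX : ∀ j, (X j ∩ R).card + (X j \ R).card = (X j).card :=
    fun j => Finset.card_inter_add_card_sdiff (X j) R
  have splitY : ∀ j, (Y j ∩ R).card + (Y j \ R).card = (Y j).card :=
    fun j => Finset.card_inter_add_card_sdiff (Y j) R
  have hBi := KL i (Or.inl rfl)
  have hbi : (X i ∩ R).card < (Y i ∩ R).card := by
    have := splitX i; have := splitY i; omega
  have hsums : ∑ j, (Y j ∩ R).card = ∑ j, (X j ∩ R).card := by rw [sumX, sumY]
  have hsplit1 : ∑ j ∈ Finset.univ.erase i, (Y j ∩ R).card + (Y i ∩ R).card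
      = ∑ j, (Y j ∩ R).card := Finset.sum_erase_add _ _ (Finset.mem_univ i)
  have hsplit2 : ∑ j ∈ Finset.univ.erase i, (X j ∩ R).card + (X i ∩ R).card
      = ∑ j, (X j ∩ R).card := Finset.sum_erase_add _ _ (Finset.mem_univ i)
  have hlt : ∑ j ∈ Finset.univ.erase i, (Y j ∩ R).card
      < ∑ j ∈ Finset.univ.erase i, (X j ∩ R).card := by omega
  obtain ⟨j, _, hjlt⟩ := Finset.exists_lt_of_sum_lt hlt
  have hne : (X j ∩ R).Nonempty := Finset.card_pos.mp (by omega)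
  obtain ⟨g, hg⟩ := hne
  have hgXj := Finset.mem_inter.mp hg
  have hXY : (X j).card ≤ (Y j).card := by
    by_contra h
    push_neg at h
    obtain ⟨g₀, h1, h2⟩ := (memR g).mp hgXj.2
    exact H g₀ g h1 h2 j h hgXj.1
  have hBj := KL j (Or.inr ⟨g, hg⟩)
  have := splitX j; have := splitY j
  omega
end

section
/- If a utility vector u Lorenz dominates every utility vector in a set S containing u, then u is leximin-optimal within S: there is no w ∈ S whose ascending-sorted vector is lexicographically greater than that of u. -/
/-- The utility vector sorted in ascending order. -/
def sortedAsc {n : ℕ} (u : Fin n → ℕ) : List ℕ :=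
  Multiset.sort (Multiset.ofList (List.ofFn u)) (· ≤ ·)

/-- `u` Lorenz dominates `w`: every prefix sum of the ascending sort of `u`
is at least the corresponding prefix sum for `w`. -/
def LorenzDom {n : ℕ} (u w : Fin n → ℕ) : Prop :=
  ∀ k ≤ n, ((sortedAsc w).take k).sum ≤ ((sortedAsc u).take k).sum

theorem List.exists_sum_take_lt_of_lex {α : Type*} [AddMonoid α] [LT α]
    [AddLeftStrictMono α] {a b : List α} (hab : List.Lex (· < ·) a b)
    (hlen : a.length = b.length) : ∃ k ≤ a.length, (a.take k).sum < (b.take k).sum := by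
  induction hab with
  | nil => simp at hlen
  | @cons x as bs _ ih =>
    obtain ⟨k, hk, hlt⟩ := ih (by simpa using hlen)
    exact ⟨k + 1, by simpa using hk, by simpa using add_lt_add_right hlt x⟩
  | rel hxy => exact ⟨1, by simp, by simpa using hxy⟩

@[simp]
theorem length_sortedAsc {n : ℕ} (u : Fin n → ℕ) : (sortedAsc u).length = n := by
  simp [sortedAsc]

theorem lorenzDom_leximin_optimal_general {n : ℕ} (S : Set (Fin n → ℕ))
    (u : Fin n → ℕ) (hdom : ∀ w ∈ S, LorenzDom u w) :
    ∀ w ∈ S, ¬ List.Lex (· < ·) (sortedAsc u) (sortedAsc w) := by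
  intro w hw hlex
  obtain ⟨k, hk, hlt⟩ := List.exists_sum_take_lt_of_lex hlex (by simp)
  exact (hdom w hw k (by simpa using hk)).not_gt hlt

theorem lorenzDom_leximin_optimal {n : ℕ} (S : Set (Fin n → ℕ))
    (u : Fin n → ℕ) (hu : u ∈ S) (hdom : ∀ w ∈ S, LorenzDom u w) :
    ∀ w ∈ S, ¬ List.Lex (· < ·) (sortedAsc u) (sortedAsc w) :=
  lorenzDom_leximin_optimal_general S u hdom
end

section
/- Suppose agents have matroid rank valuations and X is a non-redundant allocation that Lorenz dominates every other allocation. Then X is envy-free up to any good (EFX): for all agents i, j with v_i(X_i) < v_i(X_j), for every g ∈ X_j we have v_i(X_i) ≥ v_i(X_j \ {g}). -/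
/-- An allocation: bundles are pairwise disjoint (goods may be left unallocated). -/
def IsAlloc {G : Type*} [DecidableEq G] {n : ℕ} (X : Fin n → Finset G) : Prop :=
  ∀ i j, i ≠ j → Disjoint (X i) (X j)

open Finset

theorem List.Pairwise.filter_le_append_filter_lt {α : Type*} [LinearOrder α] {L : List α}
    (hL : L.Pairwise (· ≤ ·)) (a : α) : L.filter (· ≤ a) ++ L.filter (a < ·) = L := by
  induction L with
  | nil => rfl
  | cons x L ih =>
    obtain ⟨hx, hL⟩ := List.pairwise_cons.mp hL
    by_cases hxa : x ≤ a
    · simp [hxa, ih hL]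
    · have hgt : ∀ y ∈ L, a < y := fun y hy => (not_le.mp hxa).trans_le (hx y hy)
      have hle : L.filter (· ≤ a) = [] :=
        List.filter_eq_nil_iff.mpr fun y hy => by simpa using hgt y hy
      have hlt : L.filter (a < ·) = L :=
        List.filter_eq_self.mpr fun y hy => by simpa using hgt y hy
      simp [hxa, not_le.mp hxa, hle, hlt]

theorem List.Pairwise.take_length_filter_le {α : Type*} [LinearOrder α] {L : List α}
    (hL : L.Pairwise (· ≤ ·)) (a : α) :
    L.take (L.filter (· ≤ a)).length = L.filter (· ≤ a) :=
  calc L.take _ = (L.filter (· ≤ a) ++ L.filter (a < ·)).take (L.filter (· ≤ a)).length := by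
        rw [hL.filter_le_append_filter_lt]
    _ = _ := List.take_left

theorem List.Pairwise.sum_filter_le_add_lt_sum_take {L : List ℕ} (hL : L.Pairwise (· ≤ ·))
    {a : ℕ} (h : ∃ x ∈ L, a < x) :
    (L.filter (· ≤ a)).sum + a < (L.take ((L.filter (· ≤ a)).length + 1)).sum := by
  obtain ⟨x, hxL, hx⟩ := h
  obtain ⟨y, B, hB⟩ : ∃ y B, L.filter (a < ·) = y :: B :=
    List.ne_nil_iff_exists_cons.mp
      (List.ne_nil_of_mem (List.mem_filter.mpr ⟨hxL, by simpa using hx⟩))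
  have hy : a < y := by
    simpa using List.of_mem_filter (hB ▸ List.mem_cons_self : y ∈ L.filter (a < ·))
  calc (L.filter (· ≤ a)).sum + a < (L.filter (· ≤ a)).sum + y := by omega
    _ = ((L.filter (· ≤ a) ++ L.filter (a < ·)).take
          ((L.filter (· ≤ a)).length + 1)).sum := by
        simp [List.take_length_add_append, hB]
    _ = _ := by rw [hL.filter_le_append_filter_lt]

section SortedAsc

variable {n : ℕ} (u : Fin n → ℕ)

theorem coe_sortedAsc : (sortedAsc u : Multiset ℕ) = univ.val.map u := by
  rw [sortedAsc, Multiset.sort_eq, Fin.univ_val_map]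

theorem pairwise_sortedAsc : (sortedAsc u).Pairwise (· ≤ ·) :=
  Multiset.pairwise_sort _ _

theorem coe_filter_sortedAsc (p : ℕ → Prop) [DecidablePred p] :
    ((sortedAsc u).filter (fun x => decide (p x)) : Multiset ℕ) =
      (univ.filter fun l => p (u l)).val.map u := by
  rw [← Multiset.filter_coe, coe_sortedAsc, Multiset.filter_map, filter_val]
  rfl

theorem length_filter_le_sortedAsc (a : ℕ) :
    ((sortedAsc u).filter (· ≤ a)).length = #{l | u l ≤ a} := by
  rw [← Multiset.coe_card, coe_filter_sortedAsc, Multiset.card_map]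
  rfl

theorem sum_filter_le_sortedAsc (a : ℕ) :
    ((sortedAsc u).filter (· ≤ a)).sum = ∑ l with u l ≤ a, u l := by
  rw [← Multiset.sum_coe, coe_filter_sortedAsc]
  rfl

theorem sum_take_sortedAsc_card_filter_le (a : ℕ) :
    ((sortedAsc u).take #{l | u l ≤ a}).sum = ∑ l with u l ≤ a, u l := by
  rw [← length_filter_le_sortedAsc, (pairwise_sortedAsc u).take_length_filter_le,
    sum_filter_le_sortedAsc]

theorem lt_sum_take_sortedAsc_card_filter_le_add_one {a : ℕ} (h : ∃ l, a < u l) :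
    ∑ l with u l ≤ a, u l + a < ((sortedAsc u).take (#{l | u l ≤ a} + 1)).sum := by
  obtain ⟨l, hl⟩ := h
  have hmem : u l ∈ sortedAsc u := by
    rw [← Multiset.mem_coe, coe_sortedAsc]
    exact Multiset.mem_map_of_mem _ (mem_univ l)
  rw [← length_filter_le_sortedAsc, ← sum_filter_le_sortedAsc]
  exact (pairwise_sortedAsc u).sum_filter_le_add_lt_sum_take ⟨u l, hmem, hl⟩

end SortedAsc

theorem not_lorenzDom_of_transfer {n : ℕ} {u w : Fin n → ℕ} {i j : Fin n} (hij : i ≠ j)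
    (hi : u i < w i) (hj : u i < w j) (huj : u i < u j)
    (hrest : ∀ l, l ≠ i → l ≠ j → w l = u l) : ¬ LorenzDom u w := by
  intro hdom
  set a := u i
  have hi_mem : i ∈ ({l | u l ≤ a} : Finset (Fin n)) := by simp [a]
  have hfilter :
      ({l | w l ≤ a} : Finset (Fin n)) = ({l | u l ≤ a} : Finset (Fin n)).erase i := by
    ext l
    rcases eq_or_ne l i with rfl | hli
    · simp [hi]
    rcases eq_or_ne l j with rfl | hlj
    · simp [hli, not_le.mpr hj, not_le.mpr huj]
    · simp [hli, hrest l hli hlj]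
  have hcard : #{l | w l ≤ a} + 1 = #{l | u l ≤ a} := by
    rw [hfilter, card_erase_add_one hi_mem]
  have hsum : ∑ l with w l ≤ a, w l + a = ∑ l with u l ≤ a, u l := by
    rw [hfilter, ← sum_erase_add _ _ hi_mem]
    congr 1
    refine sum_congr rfl fun l hl => hrest l (ne_of_mem_erase hl) ?_
    rintro rfl
    exact (mem_filter.mp (mem_of_mem_erase hl)).2.not_gt huj
  have hlow := lt_sum_take_sortedAsc_card_filter_le_add_one w ⟨j, hj⟩
  have hup := sum_take_sortedAsc_card_filter_le u a
  have hk := hdom #{l | u l ≤ a} ((card_filter_le _ _).trans_eq (card_fin n))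
  rw [← hcard] at hk hup
  omega

namespace IsMRF

variable {G : Type*} [DecidableEq G] {v : Finset G → ℕ}

theorem le_insert (hv : IsMRF v) (S : Finset G) (g : G) : v S ≤ v (insert g S) := by
  rcases hv.2.1 S g with h | h <;> omega

theorem insert_le (hv : IsMRF v) (S : Finset G) (g : G) : v (insert g S) ≤ v S + 1 := by
  rcases hv.2.1 S g with h | h <;> omega

theorem le_union (hv : IsMRF v) (S T : Finset G) : v S ≤ v (S ∪ T) := by
  induction T using Finset.induction_on with
  | empty => simp
  | insert g T _ ih => exact ih.trans (union_insert g S T ▸ hv.le_insert _ g)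

theorem mono (hv : IsMRF v) {S T : Finset G} (h : S ⊆ T) : v S ≤ v T :=
  union_eq_right.mpr h ▸ hv.le_union S T

theorem le_card (hv : IsMRF v) (S : Finset G) : v S ≤ #S := by
  induction S using Finset.induction_on with
  | empty => simp [hv.1]
  | insert g S hg ih => rw [card_insert_of_notMem hg]; exact (hv.insert_le S g).trans (by omega)

theorem erase_add_one_of_eq_card (hv : IsMRF v) {S : Finset G} (hS : v S = #S) {g : G}
    (hg : g ∈ S) :
    v (S.erase g) + 1 = v S := by
  have h1 := hv.le_card (S.erase g)
  have h2 := hv.insert_le (S.erase g) g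
  rw [card_erase_of_mem hg] at h1
  rw [insert_erase hg] at h2
  have : 0 < #S := card_pos.mpr ⟨g, hg⟩
  omega

theorem union_eq_of_forall_insert_eq (hv : IsMRF v) {S T : Finset G}
    (hT : ∀ g ∈ T, v (insert g S) = v S) : v (S ∪ T) = v S := by
  induction T using Finset.induction_on with
  | empty => simp
  | insert t T _ ih =>
    have hST := ih fun g hg => hT g (mem_insert_of_mem hg)
    have ht := hT t (mem_insert_self t T)
    rw [union_insert]
    by_cases htST : t ∈ S ∪ T
    · rwa [insert_eq_of_mem htST]
    · have hsub := hv.2.2 S (S ∪ T) t subset_union_left htST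
      have hle := hv.le_union S (insert t T)
      rw [union_insert] at hle
      omega

theorem exists_insert_eq_add_one (hv : IsMRF v) {S T : Finset G} (h : v S < v T) :
    ∃ g ∈ T, v (insert g S) = v S + 1 := by
  by_contra! hnone
  have hST := hv.union_eq_of_forall_insert_eq fun g hg =>
    ((hv.2.1 S g).resolve_right (hnone g hg))
  have := hv.mono (subset_union_right (s₁ := S) (s₂ := T))
  omega

end IsMRF

section Allocation

variable {G : Type*} [DecidableEq G] {n : ℕ} {X : Fin n → Finset G}

theorem IsAlloc.update_of_subset (hX : IsAlloc X) {j : Fin n} {B : Finset G} (hB : B ⊆ X j) :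
    IsAlloc (Function.update X j B) := by
  intro p q hpq
  rcases eq_or_ne p j with rfl | hp
  · simpa [Function.update_of_ne hpq.symm] using (hX p q hpq).mono_left hB
  rcases eq_or_ne q j with rfl | hq
  · simpa [Function.update_of_ne hp] using (hX p q hpq).mono_right hB
  · simpa [Function.update_of_ne hp, Function.update_of_ne hq] using hX p q hpq

theorem IsAlloc.update_insert (hX : IsAlloc X) {i : Fin n} {g : G} (hg : ∀ l ≠ i, g ∉ X l) :
    IsAlloc (Function.update X i (insert g (X i))) := by
  intro p q hpq
  rcases eq_or_ne p i with rfl | hp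
  · simpa [Function.update_of_ne hpq.symm, hg q hpq.symm] using hX p q hpq
  rcases eq_or_ne q i with rfl | hq
  · simpa [Function.update_of_ne hp, hg p hp] using hX p q hpq
  · simpa [Function.update_of_ne hp, Function.update_of_ne hq] using hX p q hpq

theorem IsAlloc.transfer (hX : IsAlloc X) {i j : Fin n} (hij : i ≠ j) {g : G} (hg : g ∈ X j) :
    IsAlloc (Function.update (Function.update X j ((X j).erase g)) i (insert g (X i))) := by
  have h := (hX.update_of_subset (erase_subset g (X j))).update_insert (i := i) (g := g) ?_
  · rwa [Function.update_of_ne hij] at h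
  intro l hl
  rcases eq_or_ne l j with rfl | hlj
  · simp
  · simpa [Function.update_of_ne hlj] using disjoint_left.mp (hX j l hlj.symm) hg

end Allocation

theorem lorenz_dominating_is_EFX_general {G : Type*} [DecidableEq G] {n : ℕ}
    (v : Fin n → Finset G → ℕ) (hv : ∀ i, IsMRF (v i))
    (X : Fin n → Finset G) (hX : IsAlloc X)
    (hXnr : ∀ i, v i (X i) = (X i).card)
    (hdom : ∀ Y : Fin n → Finset G, IsAlloc Y →
      LorenzDom (fun i => v i (X i)) (fun i => v i (Y i))) :
    ∀ i j, v i (X i) < v i (X j) →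
      ∀ g ∈ X j, v i ((X j).erase g) ≤ v i (X i) := by
  intro i j hij g hg
  by_contra! henvy
  have hne : i ≠ j := fun h => hij.ne (congrArg (fun l => v i (X l)) h)
  obtain ⟨h, hh, hgain⟩ := (hv i).exists_insert_eq_add_one henvy
  have hhj : h ∈ X j := mem_of_mem_erase hh
  have hloss := (hv j).erase_add_one_of_eq_card (hXnr j) hhj
  have hgap : v i (X i) < v j ((X j).erase h) := by
    have := (hv i).le_card ((X j).erase g)
    rw [card_erase_of_mem hg, ← hXnr j] at this
    omega
  refine not_lorenzDom_of_transfer hne ?_ ?_ ?_ ?_ (hdom _ (hX.transfer hne hhj))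
  · simp [hgain]
  · simpa [Function.update_of_ne hne.symm] using hgap
  · omega
  · intro l hli hlj
    simp [Function.update_of_ne hli, Function.update_of_ne hlj]

theorem lorenz_dominating_is_EFX {G : Type*} [DecidableEq G] [Fintype G] {n : ℕ}
    (v : Fin n → Finset G → ℕ) (hv : ∀ i, IsMRF (v i))
    (X : Fin n → Finset G) (hX : IsAlloc X)
    (hXnr : ∀ i, v i (X i) = (X i).card)
    (hdom : ∀ Y : Fin n → Finset G, IsAlloc Y →
      LorenzDom (fun i => v i (X i)) (fun i => v i (Y i))) :
    ∀ i j, v i (X i) < v i (X j) →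
      ∀ g ∈ X j, v i ((X j).erase g) ≤ v i (X i) :=
  lorenz_dominating_is_EFX_general v hv X hX hXnr hdom
end

section
/- In any run of an iterative process (abstracting Yankee Swap with playing set P and priority order π) where at each step the highest-priority agent among those in P with minimum bundle size either gains exactly one good or is permanently removed from P, the bundle sizes of agents in P at any time differ by at most 1, with higher-priority agents holding the (weakly) larger bundles. -/
/-- One step of the abstract Yankee Swap process: a state is a pair
`(P, s)` of the active agent set and the bundle sizes.  The agent `i`
selected is the one in `P` minimizing `(s i, π i)` lexicographically;
either `i` gains one good, or `i` is permanently removed from `P`. -/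
def YSStep {n : ℕ} (π : Fin n → Fin n)
    (st st' : Finset (Fin n) × (Fin n → ℕ)) : Prop :=
  ∃ i ∈ st.1,
    (∀ j ∈ st.1, st.2 i < st.2 j ∨ (st.2 i = st.2 j ∧ π i ≤ π j)) ∧
    (st' = (st.1, Function.update st.2 i (st.2 i + 1)) ∨
     st' = (st.1.erase i, st.2))

def YSInv {n : ℕ} (π : Fin n → Fin n)
    (st : Finset (Fin n) × (Fin n → ℕ)) : Prop :=
  ∀ i ∈ st.1, ∀ j ∈ st.1, π i < π j → st.2 j ≤ st.2 i ∧ st.2 i ≤ st.2 j + 1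

lemma YSInv_step {n : ℕ} (π : Fin n → Fin n)
    {st st' : Finset (Fin n) × (Fin n → ℕ)}
    (h : YSStep π st st') (hinv : YSInv π st) : YSInv π st' := by
  obtain ⟨i, hiP, hmin, hcase⟩ := h
  rcases hcase with rfl | rfl
  · intro a ha b hb hab
    simp only at ha hb ⊢
    rcases eq_or_ne a i with rfl | hai
    · have hbi : b ≠ a := by rintro rfl; exact lt_irrefl _ hab
      rw [Function.update_self, Function.update_of_ne hbi]
      have h1 := hinv a ha b hb hab
      have h2 := hmin b hb
      have hle : st.2 a ≤ st.2 b := by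
        rcases h2 with h | h; · omega
        · omega
      omega
    · rw [Function.update_of_ne hai]
      rcases eq_or_ne b i with hbe | hbi
      · subst hbe
        rw [Function.update_self]
        have h1 := hinv a ha b hb hab
        have h2 := hmin a ha
        have hlt : st.2 b < st.2 a := by
          rcases h2 with h | ⟨h, h'⟩
          · omega
          · exact absurd (lt_of_le_of_lt h' hab) (lt_irrefl _)
        omega
      · rw [Function.update_of_ne hbi]
        exact hinv a ha b hb hab
  · intro a ha b hb hab
    exact hinv a (Finset.mem_of_mem_erase ha) b (Finset.mem_of_mem_erase hb) hab

theorem yankee_swap_balanced {n : ℕ} (π : Fin n → Fin n)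
    (hπ : Function.Bijective π)
    (P : Finset (Fin n)) (s : Fin n → ℕ)
    (hreach : Relation.ReflTransGen (YSStep π)
      (Finset.univ, fun _ => 0) (P, s)) :
    ∀ i ∈ P, ∀ j ∈ P, π i < π j → s j ≤ s i ∧ s i ≤ s j + 1 := by
  have key : ∀ st, Relation.ReflTransGen (YSStep π)
      ((Finset.univ : Finset (Fin n)), fun _ => 0) st → YSInv π st := by
    intro st h
    induction h with
    | refl => intro a _ b _ _; exact ⟨le_refl _, Nat.le_succ _⟩
    | tail _ step ih => exact YSInv_step π step ih
  exact key (P, s) hreach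
end

section
/- For agents with matroid rank valuations and n ≥ 2, an allocation X is Lorenz dominating with respect to the augmented utility vector (v_i(X_i) + π(i)/n²)_i only if it is Lorenz dominating with respect to the original utility vector (v_i(X_i))_i. -/
/-- Ascending sort of a rational utility vector. -/
def sortedAscQ {n : ℕ} (u : Fin n → ℚ) : List ℚ :=
  Multiset.sort (Multiset.ofList (List.ofFn u)) (· ≤ ·)

/-- Lorenz domination for rational utility vectors. -/
def LorenzDomQ {n : ℕ} (u w : Fin n → ℚ) : Prop :=
  ∀ k ≤ n, ((sortedAscQ w).take k).sum ≤ ((sortedAscQ u).take k).sum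

/-- The augmented utility vector of an allocation w.r.t. priority `π`. -/
def augUtil {G : Type*} [DecidableEq G] {n : ℕ} (v : Fin n → Finset G → ℕ)
    (π : Equiv.Perm (Fin n)) (X : Fin n → Finset G) : Fin n → ℚ :=
  fun i => (v i (X i) : ℚ) + ((π i : ℕ) + 1) / (n ^ 2 : ℚ)

/-!
For `u : Fin n → α` let `P_k(u)` be the sum of its `k` smallest entries, i.e. the minimum of
`∑ i ∈ S, u i` over `k`-element index sets `S`. As a minimum of linear functions it is
superadditive, and `P_k(u + ε) ≤ P_k(u) + ∑ ε` for `ε ≥ 0`. The bonuses `ε i = (π i + 1) / n²`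
are positive and sum to at most `n · n / n² = 1`, so for `0 < k`,
`P_k(w) + P_k(ε) ≤ P_k(w + ε) ≤ P_k(u + ε) ≤ P_k(u) + 1` with `P_k(ε) > 0`;
as `P_k(w)` and `P_k(u)` are integers, `P_k(w) ≤ P_k(u)`.
-/

open scoped Finset

theorem List.Pairwise.sum_take_card_le_sum {α : Type*} [AddCommMonoid α] [LinearOrder α]
    [IsOrderedAddMonoid α] {l : List α} (hl : l.Pairwise (· ≤ ·)) {t : Multiset α}
    (ht : t ≤ l) : (l.take (Multiset.card t)).sum ≤ t.sum := by
  induction l generalizing t with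
  | nil => simp [Multiset.le_zero.mp ht]
  | cons a l ih =>
    obtain ⟨ha, hl⟩ := List.pairwise_cons.mp hl
    by_cases hat : a ∈ t
    · obtain ⟨t', rfl⟩ := Multiset.exists_cons_of_mem hat
      rw [← Multiset.cons_coe, Multiset.cons_le_cons_iff] at ht
      simpa using add_le_add_right (ih hl ht) a
    rw [← Multiset.cons_coe, Multiset.le_cons_of_notMem hat] at ht
    cases hm : Multiset.card t with
    | zero => simp [Multiset.card_eq_zero.mp hm]
    | succ m =>
      have hml : m < l.length := by simpa [hm] using Multiset.card_le_card ht
      calc ((a :: l).take (m + 1)).sum = a + (l.take m).sum := by simp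
        _ ≤ l[m] + (l.take m).sum := by gcongr; exact ha _ (List.getElem_mem hml)
        _ = (l.take (Multiset.card t)).sum := by rw [hm, List.sum_take_succ _ _ hml, add_comm]
        _ ≤ t.sum := ih hl ht

section sumSmallest

variable {α : Type*} [LinearOrder α] {n : ℕ}

def sumSmallest [AddCommMonoid α] (u : Fin n → α) (k : ℕ) : α :=
  ((Multiset.sort (List.ofFn u : Multiset α) (· ≤ ·)).take k).sum

theorem sort_ofFn_eq_ofFn_comp_sort (u : Fin n → α) :
    Multiset.sort (List.ofFn u : Multiset α) (· ≤ ·) = List.ofFn (u ∘ Tuple.sort u) :=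
  List.Perm.eq_of_pairwise' (Multiset.pairwise_sort _ _)
    (List.pairwise_ofFn.mpr fun _ _ hij => Tuple.monotone_sort u hij.le)
    (Multiset.coe_eq_coe.mp <| (Multiset.sort_eq _ _).trans
      (Multiset.coe_eq_coe.mpr ((Tuple.sort u).ofFn_comp_perm u).symm))

variable [AddCommMonoid α]

theorem exists_card_eq_and_sum_eq_sumSmallest (u : Fin n → α) {k : ℕ} (hk : k ≤ n) :
    ∃ S : Finset (Fin n), #S = k ∧ ∑ i ∈ S, u i = sumSmallest u k := by
  refine ⟨({j : Fin n | j < k} : Finset (Fin n)).map (Tuple.sort u).toEmbedding, ?_, ?_⟩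
  · simp [Fin.card_filter_val_lt, hk]
  · rw [sumSmallest, sort_ofFn_eq_ofFn_comp_sort, List.sum_take_ofFn, Finset.sum_map]
    rfl

theorem sumSmallest_pos [IsOrderedCancelAddMonoid α] {ε : Fin n → α} (hε : ∀ i, 0 < ε i)
    {k : ℕ} (hk0 : 0 < k) (hk : k ≤ n) : 0 < sumSmallest ε k := by
  obtain ⟨S, rfl, hS⟩ := exists_card_eq_and_sum_eq_sumSmallest ε hk
  exact hS ▸ Finset.sum_pos (fun i _ => hε i) (Finset.card_pos.mp hk0)

variable [IsOrderedAddMonoid α]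

theorem sumSmallest_card_le_sum (u : Fin n → α) (S : Finset (Fin n)) :
    sumSmallest u #S ≤ ∑ i ∈ S, u i := by
  have hS : S.val.map u ≤ Multiset.sort (List.ofFn u : Multiset α) (· ≤ ·) := by
    rw [Multiset.sort_eq, ← Fin.univ_val_map]
    exact Multiset.map_le_map (Finset.val_le_iff.mpr (Finset.subset_univ S))
  have := (Multiset.pairwise_sort _ _).sum_take_card_le_sum hS
  rwa [Multiset.card_map] at this

theorem sumSmallest_add_le (u ε : Fin n → α) (hε : ∀ i, 0 ≤ ε i) {k : ℕ} (hk : k ≤ n) :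
    sumSmallest (u + ε) k ≤ sumSmallest u k + ∑ i, ε i := by
  obtain ⟨T, rfl, hT⟩ := exists_card_eq_and_sum_eq_sumSmallest u hk
  calc sumSmallest (u + ε) #T ≤ ∑ i ∈ T, (u + ε) i := sumSmallest_card_le_sum _ T
    _ = sumSmallest u #T + ∑ i ∈ T, ε i := by rw [← hT, ← Finset.sum_add_distrib]; rfl
    _ ≤ sumSmallest u #T + ∑ i, ε i :=
      add_le_add le_rfl (Finset.sum_le_univ_sum_of_nonneg hε)

theorem sumSmallest_add_sumSmallest_le (u ε : Fin n → α) {k : ℕ} (hk : k ≤ n) :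
    sumSmallest u k + sumSmallest ε k ≤ sumSmallest (u + ε) k := by
  obtain ⟨S, rfl, hS⟩ := exists_card_eq_and_sum_eq_sumSmallest (u + ε) hk
  rw [← hS, Pi.add_def, Finset.sum_add_distrib]
  exact add_le_add (sumSmallest_card_le_sum u S) (sumSmallest_card_le_sum ε S)

end sumSmallest

theorem sumSmallest_natCast {R : Type*} [Semiring R] [LinearOrder R] [IsStrictOrderedRing R]
    {n : ℕ} (u : Fin n → ℕ) (k : ℕ) :
    sumSmallest (Nat.cast ∘ u : Fin n → R) k = sumSmallest u k := by
  rw [sumSmallest, sumSmallest, ← List.map_ofFn, ← Multiset.map_coe,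
    ← Multiset.map_sort (Nat.cast : ℕ → R) _ (· ≤ ·) (· ≤ ·) fun _ _ _ _ => Nat.cast_le.symm,
    ← List.map_take, Nat.cast_list_sum]

theorem LorenzDom.of_lorenzDomQ_add {n : ℕ} {u w : Fin n → ℕ} {ε : Fin n → ℚ}
    (hε : ∀ i, 0 < ε i) (hε_sum : ∑ i, ε i ≤ 1)
    (h : LorenzDomQ (fun i => u i + ε i) (fun i => w i + ε i)) : LorenzDom u w := by
  intro k hk
  change sumSmallest w k ≤ sumSmallest u k
  rcases Nat.eq_zero_or_pos k with rfl | hk0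
  · simp [sumSmallest]
  have hQ : sumSmallest ((Nat.cast ∘ w) + ε) k ≤ sumSmallest ((Nat.cast ∘ u) + ε) k := h k hk
  have key : ((sumSmallest w k : ℕ) : ℚ) + sumSmallest ε k ≤ (sumSmallest u k : ℕ) + 1 := by
    rw [← sumSmallest_natCast, ← sumSmallest_natCast]
    calc _ ≤ sumSmallest ((Nat.cast ∘ w) + ε) k := sumSmallest_add_sumSmallest_le _ _ hk
      _ ≤ sumSmallest ((Nat.cast ∘ u) + ε) k := hQ
      _ ≤ sumSmallest (Nat.cast ∘ u) k + ∑ i, ε i :=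
        sumSmallest_add_le _ _ (fun i => (hε i).le) hk
      _ ≤ _ := by gcongr
  have hlt : ((sumSmallest w k : ℕ) : ℚ) < (sumSmallest u k : ℕ) + 1 := by
    linarith [sumSmallest_pos hε hk0 hk]
  exact Nat.lt_add_one_iff.mp (by exact_mod_cast hlt)

theorem sum_natCast_add_one_div_sq_le_one {n : ℕ} (p : Fin n → Fin n) :
    ∑ i, (((p i : ℕ) : ℚ) + 1) / (n : ℚ) ^ 2 ≤ 1 := by
  rcases Nat.eq_zero_or_pos n with rfl | hn
  · simp
  calc ∑ i, (((p i : ℕ) : ℚ) + 1) / (n : ℚ) ^ 2 ≤ ∑ _i : Fin n, (n : ℚ) / (n : ℚ) ^ 2 := by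
        gcongr with i
        exact_mod_cast (p i).is_lt
    _ = 1 := by
      rw [Finset.sum_const, Finset.card_univ, Fintype.card_fin, nsmul_eq_mul]
      field_simp

theorem augmented_lorenz_dominating_implies_original_general {G : Type*} [DecidableEq G] {n : ℕ}
    (v : Fin n → Finset G → ℕ) (π : Equiv.Perm (Fin n)) (X : Fin n → Finset G)
    (hdom : ∀ Y : Fin n → Finset G, IsAlloc Y →
      LorenzDomQ (augUtil v π X) (augUtil v π Y)) :
    ∀ Y : Fin n → Finset G, IsAlloc Y →
      LorenzDom (fun i => v i (X i)) (fun i => v i (Y i)) := by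
  intro Y hY
  have hbonus_pos (i : Fin n) : 0 < (((π i : ℕ) : ℚ) + 1) / (n : ℚ) ^ 2 := by
    have : (0 : ℚ) < n := by exact_mod_cast i.pos
    positivity
  exact LorenzDom.of_lorenzDomQ_add hbonus_pos (sum_natCast_add_one_div_sq_le_one π) (hdom Y hY)

theorem augmented_lorenz_dominating_implies_original {G : Type*} [DecidableEq G]
    [Fintype G] {n : ℕ} (hn : 2 ≤ n)
    (v : Fin n → Finset G → ℕ) (hv : ∀ i, IsMRF (v i))
    (π : Equiv.Perm (Fin n)) (X : Fin n → Finset G) (hX : IsAlloc X)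
    (hdom : ∀ Y : Fin n → Finset G, IsAlloc Y →
      LorenzDomQ (augUtil v π X) (augUtil v π Y)) :
    ∀ Y : Fin n → Finset G, IsAlloc Y →
      LorenzDom (fun i => v i (X i)) (fun i => v i (Y i)) :=
  augmented_lorenz_dominating_implies_original_general v π X hdom
end
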